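/- Let Γ ⊆ Sym({1,…,n}) be a permutation group and let v, v̄ ∈ S_d(Γ) be irreducible arrangements that are not equivalent. If the representations of v and v̄ are positively isomorphic, then v and v̄ are deformation equivalent. -/

import Mathlib

open Matrix

/-- The matrix of an arrangement of `n` points in `ℝ^d`: the `i`-th row is the point `v i`. -/
def arrMat {n d : ℕ} (v : Fin n → Fin d → ℝ) : Matrix (Fin n) (Fin d) ℝ := Matrix.of v

/-- An arrangement is normalized if `MᵀM` is the identity matrix. -/
def IsNormalized {n d : ℕ} (v : Fin n → Fin d → ℝ) : Prop :=
  (arrMat v)ᵀ * arrMat v = 1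

/-- The arrangement space of `v`: the column span of its matrix, a subspace of `ℝ^n`. -/
def arrSpace {n d : ℕ} (v : Fin n → Fin d → ℝ) : Submodule ℝ (Fin n → ℝ) :=
  Submodule.span ℝ (Set.range (arrMat v)ᵀ)

/-- `detPair v w = det (M_wᵀ * M_v)`, i.e. `det(v, w̄) = det(M̄ᵀ M)` with `w` playing `v̄`. -/
noncomputable def detPair {n d : ℕ} (v w : Fin n → Fin d → ℝ) : ℝ :=
  ((arrMat w)ᵀ * arrMat v).det

/-- Two subspaces `U, W ⊆ ℝ^n` are orthogonal if `⟨u, w⟩ = 0` for all `u ∈ U`, `w ∈ W`. -/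
def OrthSpaces {n : ℕ} (U W : Submodule ℝ (Fin n → ℝ)) : Prop :=
  ∀ u ∈ U, ∀ w ∈ W, u ⬝ᵥ w = 0

/-- Arrangements are equivalent if related by an invertible linear map `X`. -/
def AreEquivalent {n d : ℕ} (v w : Fin n → Fin d → ℝ) : Prop :=
  ∃ X : Matrix (Fin d) (Fin d) ℝ, X.det ≠ 0 ∧ ∀ i, X.mulVec (v i) = w i

/-- Arrangements are positively equivalent if related by a linear map of positive determinant. -/
def PosEquivalent {n d : ℕ} (v w : Fin n → Fin d → ℝ) : Prop :=
  ∃ X : Matrix (Fin d) (Fin d) ℝ, 0 < X.det ∧ ∀ i, X.mulVec (v i) = w i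

/-- `T : Γ → O(ℝ^d)` is a representation: orthogonal values and multiplicative. -/
def IsRep {n d : ℕ} (Γ : Subgroup (Equiv.Perm (Fin n)))
    (T : Γ → Matrix (Fin d) (Fin d) ℝ) : Prop :=
  (∀ φ, (T φ)ᵀ * T φ = 1) ∧ (∀ φ ψ, T (φ * ψ) = T φ * T ψ)

/-- `T` is a representation of the arrangement `v`: `T_φ v_i = v_{φ(i)}`. -/
def IsRepOf {n d : ℕ} (Γ : Subgroup (Equiv.Perm (Fin n)))
    (T : Γ → Matrix (Fin d) (Fin d) ℝ) (v : Fin n → Fin d → ℝ) : Prop :=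
  IsRep Γ T ∧ ∀ (φ : Γ) (i : Fin n), (T φ).mulVec (v i) = v (φ.val i)

/-- `v` is a `Γ`-arrangement if it has a representation. -/
def IsGammaArr {n d : ℕ} (Γ : Subgroup (Equiv.Perm (Fin n)))
    (v : Fin n → Fin d → ℝ) : Prop :=
  ∃ T : Γ → Matrix (Fin d) (Fin d) ℝ, IsRepOf Γ T v

/-- A representation is irreducible if the only invariant subspaces of `ℝ^d` are `⊥` and `⊤`. -/
def IrredRep {n d : ℕ} (Γ : Subgroup (Equiv.Perm (Fin n)))
    (T : Γ → Matrix (Fin d) (Fin d) ℝ) : Prop :=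
  ∀ W : Submodule ℝ (Fin d → ℝ), (∀ (φ : Γ), ∀ x ∈ W, (T φ).mulVec x ∈ W) → W = ⊥ ∨ W = ⊤

/-- Representations are isomorphic: an invertible equivariant map exists. -/
def IsoReps {n d : ℕ} (Γ : Subgroup (Equiv.Perm (Fin n)))
    (T T' : Γ → Matrix (Fin d) (Fin d) ℝ) : Prop :=
  ∃ R : Matrix (Fin d) (Fin d) ℝ, R.det ≠ 0 ∧ ∀ φ, R * T φ = T' φ * R

/-- Representations are positively isomorphic: an equivariant map with positive determinant. -/
def PosIsoReps {n d : ℕ} (Γ : Subgroup (Equiv.Perm (Fin n)))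
    (T T' : Γ → Matrix (Fin d) (Fin d) ℝ) : Prop :=
  ∃ R : Matrix (Fin d) (Fin d) ℝ, 0 < R.det ∧ ∀ φ, R * T φ = T' φ * R

/-- `S_d(Γ)`: the set of normalized `Γ`-arrangements of `n` points in `ℝ^d`. -/
def SdSet (n d : ℕ) (Γ : Subgroup (Equiv.Perm (Fin n))) : Set (Fin n → Fin d → ℝ) :=
  {v | IsNormalized v ∧ IsGammaArr Γ v}

/-- Deformation equivalence: a continuous path in `S_d(Γ)` from `v` to `w`. -/
def DeformEquiv {n d : ℕ} (Γ : Subgroup (Equiv.Perm (Fin n)))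
    (v w : Fin n → Fin d → ℝ) : Prop :=
  ∃ c : ℝ → (Fin n → Fin d → ℝ), ContinuousOn c (Set.Icc 0 1) ∧
    (∀ t ∈ Set.Icc (0:ℝ) 1, c t ∈ SdSet n d Γ) ∧ c 0 = v ∧ c 1 = w

/-- `v` is flexible if it can be deformed into some non-equivalent arrangement. -/
def Flexible {n d : ℕ} (Γ : Subgroup (Equiv.Perm (Fin n))) (v : Fin n → Fin d → ℝ) : Prop :=
  ∃ w : Fin n → Fin d → ℝ, DeformEquiv Γ v w ∧ ¬ AreEquivalent v w

/-- A subspace `W ⊆ ℝ^n` is `Γ`-invariant (under the permutation action). -/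
def GammaInvariant {n : ℕ} (Γ : Subgroup (Equiv.Perm (Fin n)))
    (W : Submodule ℝ (Fin n → ℝ)) : Prop :=
  ∀ (φ : Γ), ∀ x ∈ W, (fun i => x (φ.val⁻¹ i)) ∈ W

/-!
By Schur's lemma, `Rᵀ R` is a positive multiple of the identity for the intertwiner `R` from `T`
to `T'` with `det R > 0`, so rescaling `R` gives an orthogonal intertwiner `Q` with `det Q > 0`,
and `w₂ = Qᵀ w` carries the same representation `T` as `v`. Schur's lemma again gives
`M_vᵀ M_{w₂} + M_{w₂}ᵀ M_v = ν • 1`, and `ν > -2` since otherwise `w₂ = -v` would be equivalent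
to `v`; so the segment from `v` to `w₂`, rescaled to stay normalized, is a `Γ`-deformation.
Finally `w₂` is deformed back to `w` along a path from `Qᵀ` to `1` in `SO(d)`: `Qᵀ` is a product
of an even number of Householder reflections, and `H_a H_b` is joined to `H_a H_a = 1` by moving
`b` to `a`.
-/

section Householder

variable {m : Type*} [Fintype m]

lemma dotProduct_self_pos {a : m → ℝ} (ha : a ≠ 0) : 0 < a ⬝ᵥ a :=
  lt_of_le_of_ne (by simpa using dotProduct_star_self_nonneg a)
    (Ne.symm (dotProduct_self_eq_zero.not.mpr ha))

variable [DecidableEq m]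

noncomputable def householder (a : m → ℝ) : Matrix m m ℝ :=
  1 - (2 / (a ⬝ᵥ a)) • vecMulVec a a

lemma householder_mulVec (a x : m → ℝ) :
    householder a *ᵥ x = x - (2 * (a ⬝ᵥ x) / (a ⬝ᵥ a)) • a := by
  rw [householder, sub_mulVec, one_mulVec, smul_mulVec, vecMulVec_mulVec, op_smul_eq_smul,
    smul_smul]
  ring_nf

lemma householder_mulVec_of_dotProduct_eq_zero {a x : m → ℝ} (h : a ⬝ᵥ x = 0) :
    householder a *ᵥ x = x := by
  simp [householder_mulVec, h]

lemma householder_neg (a : m → ℝ) : householder (-a) = householder a := by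
  simp [householder]

lemma householder_sub_mulVec_self {u e : m → ℝ} (h : u ⬝ᵥ u = e ⬝ᵥ e) (hue : u ≠ e) :
    householder (u - e) *ᵥ u = e := by
  have hne : (u - e) ⬝ᵥ (u - e) ≠ 0 := by rwa [Ne, dotProduct_self_eq_zero, sub_eq_zero]
  have hcoef : 2 * ((u - e) ⬝ᵥ u) / ((u - e) ⬝ᵥ (u - e)) = 1 := by
    rw [div_eq_one_iff_eq hne]
    simp only [sub_dotProduct, dotProduct_sub, dotProduct_comm e u, h]
    ring
  rw [householder_mulVec, hcoef, one_smul, sub_sub_cancel]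

lemma transpose_householder (a : m → ℝ) : (householder a)ᵀ = householder a := by
  simp [householder]

lemma householder_mul_self {a : m → ℝ} (ha : a ≠ 0) : householder a * householder a = 1 := by
  refine ext_iff_mulVec.mpr fun x => ?_
  have haa : a ⬝ᵥ a ≠ 0 := by simpa using ha
  rw [← mulVec_mulVec, one_mulVec, householder_mulVec a x, householder_mulVec]
  simp only [dotProduct_sub, dotProduct_smul, smul_eq_mul, sub_sub, ← add_smul]
  rw [sub_eq_self, smul_eq_zero]
  left
  field_simp
  ring

lemma householder_mem_orthogonalGroup {a : m → ℝ} (ha : a ≠ 0) :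
    householder a ∈ orthogonalGroup m ℝ := by
  rw [mem_orthogonalGroup_iff', transpose_householder, householder_mul_self ha]

lemma det_householder {a : m → ℝ} (ha : a ≠ 0) : (householder a).det = -1 := by
  have haa : a ⬝ᵥ a ≠ 0 := by simpa using ha
  rw [householder, sub_eq_add_neg, ← neg_smul, vecMulVec_eq Unit, ← Matrix.smul_mul,
    ← replicateCol_smul, det_one_add_replicateCol_mul_replicateRow, dotProduct_smul,
    smul_eq_mul]
  field_simp
  ring

lemma continuousOn_householder {s : Set ℝ} {c : ℝ → m → ℝ} (hc : Continuous c)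
    (hs : ∀ t ∈ s, c t ≠ 0) : ContinuousOn (fun t => householder (c t)) s := by
  have hden : ContinuousOn (fun t => 2 / (c t ⬝ᵥ c t)) s :=
    continuousOn_const.div (hc.dotProduct hc).continuousOn fun t ht => by simpa using hs t ht
  exact continuousOn_const.sub (hden.smul (hc.matrix_vecMulVec hc).continuousOn)

lemma joinedIn_one_householder_mul {a b : m → ℝ} (ha : a ≠ 0) (hb : b ≠ 0) :
    JoinedIn (orthogonalGroup m ℝ) 1 (householder a * householder b) := by
  wlog hab : 0 ≤ a ⬝ᵥ b generalizing b
  · simpa only [householder_neg] using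
      this (neg_ne_zero.mpr hb) (by rw [dotProduct_neg]; linarith)
  -- The segment from `b` to `a` avoids `0` because `a ⬝ᵥ b ≥ 0`.
  set c : ℝ → m → ℝ := fun t => (1 - t) • b + t • a
  have hc : ∀ t ∈ Set.Icc (0 : ℝ) 1, c t ≠ 0 := by
    rintro t ⟨ht0, ht1⟩ hct
    have hcc : c t ⬝ᵥ c t = (1 - t) ^ 2 * (b ⬝ᵥ b) + 2 * t * (1 - t) * (a ⬝ᵥ b)
        + t ^ 2 * (a ⬝ᵥ a) := by
      simp only [c, add_dotProduct, dotProduct_add, smul_dotProduct, dotProduct_smul,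
        smul_eq_mul, dotProduct_comm b a]
      ring
    rw [hct, zero_dotProduct] at hcc
    have hA := dotProduct_self_pos ha
    have hB := dotProduct_self_pos hb
    have hmid := mul_nonneg (mul_nonneg ht0 (sub_nonneg.mpr ht1)) hab
    have hA' := mul_nonneg (sq_nonneg t) hA.le
    have hB' := mul_nonneg (sq_nonneg (1 - t)) hB.le
    rcases le_total t (1 / 2) with ht | ht
    · nlinarith [mul_le_mul_of_nonneg_right (show 1 / 4 ≤ (1 - t) ^ 2 by nlinarith) hB.le]
    · nlinarith [mul_le_mul_of_nonneg_right (show 1 / 4 ≤ t ^ 2 by nlinarith) hA.le]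
  refine JoinedIn.symm (JoinedIn.ofLine (f := fun t => householder a * householder (c t))
    (continuousOn_const.mul (continuousOn_householder (by fun_prop) hc)) ?_ ?_ ?_)
  · simp [c]
  · simp [c, householder_mul_self ha]
  · rintro _ ⟨t, ht, rfl⟩
    exact mul_mem (householder_mem_orthogonalGroup ha) (householder_mem_orthogonalGroup (hc t ht))

lemma det_prod_householder {L : List (m → ℝ)} (hL : ∀ a ∈ L, a ≠ 0) :
    (L.map householder).prod.det = (-1) ^ L.length := by
  induction L with
  | nil => simp
  | cons a L ih =>
    simp only [List.forall_mem_cons] at hL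
    rw [List.map_cons, List.prod_cons, det_mul, det_householder hL.1, ih hL.2, List.length_cons,
      pow_succ']

lemma joinedIn_one_prod_householder {L : List (m → ℝ)} (hL : ∀ a ∈ L, a ≠ 0)
    (heven : Even L.length) : JoinedIn (orthogonalGroup m ℝ) 1 (L.map householder).prod := by
  match L, hL, heven with
  | [], _, _ => exact JoinedIn.refl (one_mem _)
  | [_], _, heven => exact absurd heven (by simp)
  | a :: b :: L, hL, heven =>
    simp only [List.forall_mem_cons] at hL
    have hrest := joinedIn_one_prod_householder hL.2.2 (by simpa [Nat.even_add_one] using heven)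
    rw [List.map_cons, List.map_cons, List.prod_cons, List.prod_cons, ← mul_assoc, ← mul_one 1]
    exact ((joinedIn_one_householder_mul hL.1 hL.2.1).mul hrest).mono
      (Set.mul_subset_iff.mpr fun _ hx _ hy => mul_mem hx hy)

lemma mulVec_dotProduct_mulVec_of_mem_orthogonalGroup {P : Matrix m m ℝ}
    (hP : P ∈ orthogonalGroup m ℝ) (x y : m → ℝ) : (P *ᵥ x) ⬝ᵥ (P *ᵥ y) = x ⬝ᵥ y := by
  rw [dotProduct_mulVec, ← mulVec_transpose, mulVec_mulVec, (mem_orthogonalGroup_iff' m ℝ).mp hP,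
    one_mulVec]

lemma exists_prod_householder_eq {Q : Matrix m m ℝ} (hQ : Q ∈ orthogonalGroup m ℝ) :
    ∃ L : List (m → ℝ), (∀ a ∈ L, a ≠ 0) ∧ (L.map householder).prod = Q := by
  suffices ∀ s : Finset m, ∃ L : List (m → ℝ), (∀ a ∈ L, a ≠ 0) ∧
      ∃ P ∈ orthogonalGroup m ℝ, (L.map householder).prod * P = Q ∧
        ∀ j ∈ s, P *ᵥ Pi.single j 1 = Pi.single j 1 by
    obtain ⟨L, hL, P, -, hLP, hP⟩ := this Finset.univ
    have hP1 : P = 1 := ext_of_mulVec_single fun j => by rw [hP j (Finset.mem_univ j), one_mulVec]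
    exact ⟨L, hL, by rwa [hP1, mul_one] at hLP⟩
  intro s
  induction s using Finset.induction_on with
  | empty => exact ⟨[], by simp, Q, hQ, by simp, by simp⟩
  | insert j s hj ih =>
    obtain ⟨L, hL, P, hP, hLP, hfix⟩ := ih
    set e : m → ℝ := Pi.single j 1
    set u := P *ᵥ e
    by_cases hu : u = e
    · exact ⟨L, hL, P, hP, hLP, Finset.forall_mem_insert _ _ _ |>.mpr ⟨hu, hfix⟩⟩
    have ha : u - e ≠ 0 := sub_ne_zero.mpr hu
    have hH := householder_mem_orthogonalGroup ha
    refine ⟨L ++ [u - e], ?_, householder (u - e) * P, mul_mem hH hP, ?_, ?_⟩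
    · simpa [or_imp, forall_and] using ⟨hL, ha⟩
    · rw [List.map_append, List.prod_append, List.map_singleton, List.prod_singleton, mul_assoc,
        ← mul_assoc (householder _), householder_mul_self ha, one_mul, hLP]
    · refine (Finset.forall_mem_insert _ _ _).mpr ⟨?_, fun i hi => ?_⟩
      · rw [← mulVec_mulVec, householder_sub_mulVec_self
          (mulVec_dotProduct_mulVec_of_mem_orthogonalGroup hP e e) hu]
      · have hij : i ≠ j := ne_of_mem_of_not_mem hi hj
        rw [← mulVec_mulVec, hfix i hi]
        have hui : u ⬝ᵥ Pi.single i 1 = 0 := by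
          rw [← hfix i hi, mulVec_dotProduct_mulVec_of_mem_orthogonalGroup hP]
          simp [e, hij]
        refine householder_mulVec_of_dotProduct_eq_zero ?_
        rw [sub_dotProduct, hui]
        simp [e, hij]

lemma joinedIn_one_of_det_pos {Q : Matrix m m ℝ} (hQ : Q ∈ orthogonalGroup m ℝ)
    (hdet : 0 < Q.det) : JoinedIn (orthogonalGroup m ℝ) 1 Q := by
  obtain ⟨L, hL, rfl⟩ := exists_prod_householder_eq hQ
  refine joinedIn_one_prod_householder hL ?_
  rw [det_prod_householder hL] at hdet
  by_contra hodd
  rw [Nat.not_even_iff_odd] at hodd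
  rw [hodd.neg_one_pow] at hdet
  norm_num at hdet

end Householder

section Arrangements

variable {n d : ℕ} {Γ : Subgroup (Equiv.Perm (Fin n))} {T T' : Γ → Matrix (Fin d) (Fin d) ℝ}
  {a b : Fin n → Fin d → ℝ}

lemma IsRep.map_one (hT : IsRep Γ T) : T 1 = 1 :=
  calc T 1 = (T 1)ᵀ * (T 1 * T 1) := by rw [← Matrix.mul_assoc, hT.1, Matrix.one_mul]
    _ = 1 := by rw [← hT.2, mul_one, hT.1]

lemma IsRep.map_inv (hT : IsRep Γ T) (φ : Γ) : T φ⁻¹ = (T φ)ᵀ :=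
  calc T φ⁻¹ = (T φ)ᵀ * (T φ * T φ⁻¹) := by rw [← Matrix.mul_assoc, hT.1, Matrix.one_mul]
    _ = (T φ)ᵀ := by rw [← hT.2, mul_inv_cancel, hT.map_one, Matrix.mul_one]

lemma IsRep.transpose_mul_eq_of_mul_eq (hT : IsRep Γ T) (hT' : IsRep Γ T')
    {R : Matrix (Fin d) (Fin d) ℝ} (hR : ∀ φ, R * T φ = T' φ * R) (φ : Γ) :
    Rᵀ * T' φ = T φ * Rᵀ := by
  have h := congrArg transpose (hR φ⁻¹)
  rwa [transpose_mul, transpose_mul, hT.map_inv, hT'.map_inv, transpose_transpose,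
    transpose_transpose, eq_comm] at h

lemma IrredRep.eq_smul_one_of_commute (hirr : IrredRep Γ T) {S : Matrix (Fin d) (Fin d) ℝ}
    (hS : Sᵀ = S) (hST : ∀ φ, S * T φ = T φ * S) : ∃ μ : ℝ, S = μ • 1 := by
  rcases isEmpty_or_nonempty (Fin d) with hd | ⟨⟨j⟩⟩
  · exact ⟨0, Subsingleton.elim _ _⟩
  have hherm : S.IsHermitian := by rwa [IsHermitian, conjTranspose_eq_transpose_of_trivial]
  set μ := hherm.eigenvalues j
  set E := Module.End.eigenspace (toLin' S) μ
  have hE : E = ⊤ := by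
    refine (hirr E fun φ x hx => ?_).resolve_left fun hbot => ?_
    · rw [Module.End.mem_eigenspace_iff, toLin'_apply] at hx ⊢
      rw [mulVec_mulVec, hST, ← mulVec_mulVec, hx, mulVec_smul]
    · have hx : ⇑(hherm.eigenvectorBasis j) ∈ E := by
        rw [Module.End.mem_eigenspace_iff, toLin'_apply]
        exact hherm.mulVec_eigenvectorBasis j
      rw [hbot, Submodule.mem_bot] at hx
      exact hherm.eigenvectorBasis.orthonormal.ne_zero j (by simpa using hx)
  refine ⟨μ, ext_iff_mulVec.mpr fun x => ?_⟩
  have hx : x ∈ E := hE ▸ Submodule.mem_top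
  rw [Module.End.mem_eigenspace_iff, toLin'_apply] at hx
  rw [hx, smul_mulVec, one_mulVec]

lemma IrredRep.exists_orthogonal_intertwiner [NeZero d] (hirr : IrredRep Γ T) (hT : IsRep Γ T)
    (hT' : IsRep Γ T') {R : Matrix (Fin d) (Fin d) ℝ} (hRdet : 0 < R.det)
    (hR : ∀ φ, R * T φ = T' φ * R) :
    ∃ Q ∈ orthogonalGroup (Fin d) ℝ, 0 < Q.det ∧ ∀ φ, Q * T φ = T' φ * Q := by
  obtain ⟨μ, hμ⟩ := hirr.eq_smul_one_of_commute (S := Rᵀ * R)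
    (by rw [transpose_mul, transpose_transpose]) fun φ => by
      rw [Matrix.mul_assoc, hR, ← Matrix.mul_assoc, hT.transpose_mul_eq_of_mul_eq hT' hR,
        Matrix.mul_assoc]
  have hμ0 : 0 ≤ μ := by
    simpa [hμ] using (posSemidef_conjTranspose_mul_self R).diag_nonneg (i := 0)
  have hμpos : 0 < μ := by
    refine hμ0.lt_of_ne fun h => hRdet.ne' ?_
    rw [← h, zero_smul, ← conjTranspose_eq_transpose_of_trivial,
      conjTranspose_mul_self_eq_zero] at hμ
    rw [hμ, det_zero]
  refine ⟨(√μ)⁻¹ • R, (mem_orthogonalGroup_iff' _ _).mpr ?_, ?_, fun φ => ?_⟩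
  · rw [transpose_smul, smul_mul_smul_comm, hμ, smul_smul, ← mul_inv, Real.mul_self_sqrt hμpos.le,
      inv_mul_cancel₀ hμpos.ne', one_smul]
  · rw [det_smul]
    exact mul_pos (by positivity) hRdet
  · rw [Matrix.smul_mul, Matrix.mul_smul, hR]

lemma arrMat_mulVec (u : Fin n → Fin d → ℝ) (P : Matrix (Fin d) (Fin d) ℝ) :
    arrMat (fun i => P *ᵥ u i) = arrMat u * Pᵀ := by
  ext i j
  simp [arrMat, mul_apply, mulVec, dotProduct, mul_comm]

lemma IsNormalized.mulVec {u : Fin n → Fin d → ℝ} (hu : IsNormalized u)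
    {P : Matrix (Fin d) (Fin d) ℝ} (hP : P ∈ orthogonalGroup (Fin d) ℝ) :
    IsNormalized (fun i => P *ᵥ u i) := by
  rw [IsNormalized, arrMat_mulVec, transpose_mul, transpose_transpose, Matrix.mul_assoc,
    ← Matrix.mul_assoc (arrMat u)ᵀ, hu, Matrix.one_mul, (mem_orthogonalGroup_iff _ _).mp hP]

lemma IsRep.conj (hT : IsRep Γ T) {P : Matrix (Fin d) (Fin d) ℝ}
    (hP : P ∈ orthogonalGroup (Fin d) ℝ) : IsRep Γ (fun φ => P * T φ * Pᵀ) := by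
  have hPtP := (mem_orthogonalGroup_iff' _ _).mp hP
  have hPPt := (mem_orthogonalGroup_iff _ _).mp hP
  refine ⟨fun φ => ?_, fun φ ψ => ?_⟩
  · calc (P * T φ * Pᵀ)ᵀ * (P * T φ * Pᵀ) = P * ((T φ)ᵀ * (Pᵀ * P) * T φ) * Pᵀ := by
          simp only [transpose_mul, transpose_transpose, Matrix.mul_assoc]
      _ = 1 := by rw [hPtP, Matrix.mul_one, hT.1, Matrix.mul_one, hPPt]
  · calc P * T (φ * ψ) * Pᵀ = P * (T φ * (Pᵀ * P) * T ψ) * Pᵀ := by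
          rw [hPtP, Matrix.mul_one, hT.2]
      _ = P * T φ * Pᵀ * (P * T ψ * Pᵀ) := by simp only [Matrix.mul_assoc]

lemma AreEquivalent.of_mulVec {P : Matrix (Fin d) (Fin d) ℝ}
    (hP : P ∈ orthogonalGroup (Fin d) ℝ) (h : AreEquivalent a (fun i => P *ᵥ b i)) :
    AreEquivalent a b := by
  obtain ⟨X, hX, hXa⟩ := h
  have hPtP := (mem_orthogonalGroup_iff' _ _).mp hP
  have hPt : Pᵀ.det ≠ 0 := left_ne_zero_of_mul_eq_one (by rw [← det_mul, hPtP, det_one])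
  refine ⟨Pᵀ * X, by rw [det_mul]; exact mul_ne_zero hPt hX, fun i => ?_⟩
  rw [← mulVec_mulVec, hXa, mulVec_mulVec, hPtP, one_mulVec]

lemma IsRepOf.mulVec_of_intertwine {u : Fin n → Fin d → ℝ} (hu : IsRepOf Γ T' u)
    (hT : IsRep Γ T) {P : Matrix (Fin d) (Fin d) ℝ} (hP : ∀ φ, P * T' φ = T φ * P) :
    IsRepOf Γ T (fun i => P *ᵥ u i) :=
  ⟨hT, fun φ i => by rw [mulVec_mulVec, ← hP, ← mulVec_mulVec, hu.2]⟩

lemma mulVec_mem_sdSet {u : Fin n → Fin d → ℝ} (hu : u ∈ SdSet n d Γ)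
    {P : Matrix (Fin d) (Fin d) ℝ} (hP : P ∈ orthogonalGroup (Fin d) ℝ) :
    (fun i => P *ᵥ u i) ∈ SdSet n d Γ := by
  obtain ⟨hnorm, T', hT'⟩ := hu
  refine ⟨hnorm.mulVec hP, _, hT'.mulVec_of_intertwine (hT'.1.conj hP) fun φ => ?_⟩
  rw [Matrix.mul_assoc, (mem_orthogonalGroup_iff' _ _).mp hP, Matrix.mul_one]

lemma joinedIn_sdSet_mulVec {u : Fin n → Fin d → ℝ} (hu : u ∈ SdSet n d Γ)
    {P₁ P₂ : Matrix (Fin d) (Fin d) ℝ} (hP : JoinedIn (orthogonalGroup (Fin d) ℝ) P₁ P₂) :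
    JoinedIn (SdSet n d Γ) (fun i => P₁ *ᵥ u i) (fun i => P₂ *ᵥ u i) :=
  (hP.map (f := fun P i => P *ᵥ u i) (by fun_prop)).mono
    (Set.image_subset_iff.mpr fun _ hP => mulVec_mem_sdSet hu hP)

lemma IsRepOf.arrMat_mul_transpose (ha : IsRepOf Γ T a) (φ : Γ) :
    arrMat a * (T φ)ᵀ = (arrMat a).submatrix φ.val id := by
  ext i j
  simpa [arrMat, mul_apply, mulVec, dotProduct, mul_comm] using congrFun (ha.2 φ i) j

lemma IsRepOf.transpose_arrMat_mul_commute (ha : IsRepOf Γ T a) (hb : IsRepOf Γ T b) (φ : Γ) :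
    (arrMat a)ᵀ * arrMat b * T φ = T φ * ((arrMat a)ᵀ * arrMat b) := by
  have hconj : T φ * ((arrMat a)ᵀ * arrMat b) * (T φ)ᵀ = (arrMat a)ᵀ * arrMat b :=
    calc T φ * ((arrMat a)ᵀ * arrMat b) * (T φ)ᵀ = (arrMat a * (T φ)ᵀ)ᵀ * (arrMat b * (T φ)ᵀ) := by
          simp only [transpose_mul, transpose_transpose, Matrix.mul_assoc]
      _ = (arrMat a)ᵀ * arrMat b := by
          rw [ha.arrMat_mul_transpose, hb.arrMat_mul_transpose, transpose_submatrix,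
            submatrix_mul_equiv, submatrix_id_id]
  calc (arrMat a)ᵀ * arrMat b * T φ = T φ * ((arrMat a)ᵀ * arrMat b) * ((T φ)ᵀ * T φ) := by
        rw [← Matrix.mul_assoc, hconj]
    _ = T φ * ((arrMat a)ᵀ * arrMat b) := by rw [ha.1.1, Matrix.mul_one]

lemma IrredRep.exists_add_transpose_eq_smul_one (hirr : IrredRep Γ T) (ha : IsRepOf Γ T a)
    (hb : IsRepOf Γ T b) :
    ∃ ν : ℝ, (arrMat a)ᵀ * arrMat b + ((arrMat a)ᵀ * arrMat b)ᵀ = ν • 1 := by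
  refine hirr.eq_smul_one_of_commute (by rw [transpose_add, transpose_transpose, add_comm])
    fun φ => ?_
  rw [transpose_mul, transpose_transpose, Matrix.add_mul, Matrix.mul_add,
    ha.transpose_arrMat_mul_commute hb, hb.transpose_arrMat_mul_commute ha]

lemma IsNormalized.smul_add_smul (ha : IsNormalized a) (hb : IsNormalized b) {ν : ℝ}
    (hab : (arrMat a)ᵀ * arrMat b + ((arrMat a)ᵀ * arrMat b)ᵀ = ν • 1) {x y : ℝ}
    (hxy : x * x + y * y + x * y * ν = 1) : IsNormalized (fun i => x • a i + y • b i) := by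
  have harr : arrMat (fun i => x • a i + y • b i) = x • arrMat a + y • arrMat b := rfl
  rw [IsNormalized, harr]
  calc (x • arrMat a + y • arrMat b)ᵀ * (x • arrMat a + y • arrMat b)
      = (x * x) • ((arrMat a)ᵀ * arrMat a) + (y * y) • ((arrMat b)ᵀ * arrMat b)
        + (x * y) • ((arrMat a)ᵀ * arrMat b + ((arrMat a)ᵀ * arrMat b)ᵀ) := by
        simp only [transpose_add, transpose_smul, transpose_mul, transpose_transpose,
          Matrix.add_mul, Matrix.mul_add, Matrix.smul_mul, Matrix.mul_smul, smul_smul, smul_add]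
        module
    _ = 1 := by rw [ha, hb, hab, smul_smul, ← add_smul, ← add_smul, hxy, one_smul]

lemma IsRepOf.smul_add_smul (ha : IsRepOf Γ T a) (hb : IsRepOf Γ T b) (x y : ℝ) :
    IsRepOf Γ T (fun i => x • a i + y • b i) :=
  ⟨ha.1, fun φ i => by rw [mulVec_add, mulVec_smul, mulVec_smul, ha.2, hb.2]⟩

lemma neg_two_lt_of_not_areEquivalent (ha : IsNormalized a) (hb : IsNormalized b) {ν : ℝ}
    (hab : (arrMat a)ᵀ * arrMat b + ((arrMat a)ᵀ * arrMat b)ᵀ = ν • 1)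
    (hne : ¬ AreEquivalent a b) : -2 < ν := by
  by_contra! hν
  set N := arrMat a + arrMat b
  have hNN : Nᵀ * N = (2 + ν) • 1 := by
    rw [transpose_add, Matrix.add_mul, Matrix.mul_add, Matrix.mul_add, ← transpose_transpose
      ((arrMat b)ᵀ * arrMat a), transpose_mul, transpose_transpose, add_smul, two_smul]
    rw [← hab, ha, hb]
    abel
  -- `Nᵀ N` is positive semidefinite with trace `(2 + ν) d ≤ 0`, hence `N = 0`, i.e. `b = -a`.
  have hN : N = 0 := by
    rw [← trace_conjTranspose_mul_self_eq_zero_iff, conjTranspose_eq_transpose_of_trivial]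
    refine le_antisymm ?_ (posSemidef_conjTranspose_mul_self N).trace_nonneg
    rw [hNN, trace_smul, trace_one, smul_eq_mul]
    exact mul_nonpos_of_nonpos_of_nonneg (by linarith) (Nat.cast_nonneg _)
  refine hne ⟨-1, ?_, fun i => ?_⟩
  · simp [det_neg]
  · rw [neg_mulVec, one_mulVec, neg_eq_iff_add_eq_zero]
    exact congrFun hN i

lemma joinedIn_sdSet_of_add_transpose_eq (haN : IsNormalized a) (hbN : IsNormalized b)
    (haT : IsRepOf Γ T a) (hbT : IsRepOf Γ T b) {ν : ℝ}
    (hab : (arrMat a)ᵀ * arrMat b + ((arrMat a)ᵀ * arrMat b)ᵀ = ν • 1) (hν : -2 < ν) :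
    JoinedIn (SdSet n d Γ) a b := by
  set g : ℝ → ℝ := fun t => (1 - t) * (1 - t) + t * t + (1 - t) * t * ν
  have hg : ∀ t ∈ Set.Icc (0 : ℝ) 1, 0 < g t := by
    rintro t ⟨ht0, ht1⟩
    -- `g t = (1 - 2t)² + t (1 - t) (2 + ν)`
    rcases (mul_nonneg (sub_nonneg.mpr ht1) ht0).eq_or_lt with h | h
    · nlinarith
    · nlinarith [mul_pos h (by linarith : (0 : ℝ) < 2 + ν), sq_nonneg (1 - 2 * t)]
  have hsqrt : ∀ t ∈ Set.Icc (0 : ℝ) 1, √(g t) ≠ 0 := fun t ht =>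
    (Real.sqrt_pos.mpr (hg t ht)).ne'
  refine JoinedIn.ofLine (f := fun t i => ((1 - t) / √(g t)) • a i + (t / √(g t)) • b i)
    (by fun_prop (disch := assumption)) (by simp [g]) (by simp [g]) ?_
  rintro _ ⟨t, ht, rfl⟩
  have hxy : (1 - t) / √(g t) * ((1 - t) / √(g t)) + t / √(g t) * (t / √(g t))
      + (1 - t) / √(g t) * (t / √(g t)) * ν = 1 := by
    have hne := hsqrt t ht
    field_simp
    linear_combination -Real.mul_self_sqrt (hg t ht).le
  exact ⟨haN.smul_add_smul hbN hab hxy, T, haT.smul_add_smul hbT _ _⟩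

lemma JoinedIn.deformEquiv {v w : Fin n → Fin d → ℝ} (h : JoinedIn (SdSet n d Γ) v w) :
    DeformEquiv Γ v w := by
  obtain ⟨γ, hγ⟩ := h
  refine ⟨γ.extend, γ.continuous_extend.continuousOn, fun t ht => ?_, by simp, by simp⟩
  rw [Path.extend_apply γ ht]
  exact hγ _

end Arrangements

theorem stmt7_general {n d : ℕ} (Γ : Subgroup (Equiv.Perm (Fin n))) (v w : Fin n → Fin d → ℝ)
    (hv : v ∈ SdSet n d Γ) (hw : w ∈ SdSet n d Γ)
    (T T' : Γ → Matrix (Fin d) (Fin d) ℝ)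
    (hT : IsRepOf Γ T v) (hTirr : IrredRep Γ T)
    (hT' : IsRepOf Γ T' w)
    (hne : ¬ AreEquivalent v w)
    (hpos : PosIsoReps Γ T T') :
    DeformEquiv Γ v w := by
  have : NeZero d := ⟨by rintro rfl; exact hne ⟨1, by simp, fun i => Subsingleton.elim _ _⟩⟩
  obtain ⟨R, hRdet, hR⟩ := hpos
  obtain ⟨Q, hQ, hQdet, hQT⟩ := hTirr.exists_orthogonal_intertwiner hT.1 hT'.1 hRdet hR
  have hQt : Qᵀ ∈ orthogonalGroup (Fin d) ℝ := transpose_mem_unitaryGroup_iff.mpr hQ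
  set w₂ : Fin n → Fin d → ℝ := fun i => Qᵀ *ᵥ w i
  have hw₂N : IsNormalized w₂ := hw.1.mulVec hQt
  have hw₂ : IsRepOf Γ T w₂ :=
    hT'.mulVec_of_intertwine hT.1 (hT.1.transpose_mul_eq_of_mul_eq hT'.1 hQT)
  obtain ⟨ν, hν⟩ := hTirr.exists_add_transpose_eq_smul_one hT hw₂
  have hvw₂ : JoinedIn (SdSet n d Γ) v w₂ :=
    joinedIn_sdSet_of_add_transpose_eq hv.1 hw₂N hT hw₂ hν
      (neg_two_lt_of_not_areEquivalent hv.1 hw₂N hν fun h => hne (h.of_mulVec hQt))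
  have hw₂w : JoinedIn (SdSet n d Γ) w₂ w := by
    have hQt1 := joinedIn_one_of_det_pos hQt (by rwa [det_transpose])
    simpa using (joinedIn_sdSet_mulVec hw hQt1).symm
  exact (hvw₂.trans hw₂w).deformEquiv

theorem stmt7 {n d : ℕ} (Γ : Subgroup (Equiv.Perm (Fin n))) (v w : Fin n → Fin d → ℝ)
    (hv : v ∈ SdSet n d Γ) (hw : w ∈ SdSet n d Γ)
    (T T' : Γ → Matrix (Fin d) (Fin d) ℝ)
    (hT : IsRepOf Γ T v) (hTirr : IrredRep Γ T)
    (hT' : IsRepOf Γ T' w) (hT'irr : IrredRep Γ T')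
    (hne : ¬ AreEquivalent v w)
    (hpos : PosIsoReps Γ T T') :
    DeformEquiv Γ v w :=
  stmt7_general Γ v w hv hw T T' hT hTirr hT' hne hpos
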